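/- Let f : W × K → ℝ be smooth (W ⊆ ℝ² open, K ⊆ ℝ an open interval) with ∂_κ f nowhere zero, such that for each κ ∈ K the function (t,x) ↦ f(t,x,κ) solves the evolution equation u_t = H(t,x,u,∂_x u,…,∂_x^r u). Let Ω := {(t,x,f(t,x,κ)) : (t,x) ∈ W, κ ∈ K} be open and let Φ : Ω → ℝ be smooth with ∂_u Φ nowhere zero and Φ(t,x,f(t,x,κ)) = κ for all (t,x,κ). Then ζ := −Φ_x/Φ_u satisfies the determining equation DE₀ on Ω, and every member of the family is invariant under ∂_x + ζ∂_u, i.e., ∂_x f(t,x,κ) = ζ(t,x,f(t,x,κ)). -/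

import Mathlib

/-- Partial derivative in `t` (the first coordinate) of a function of `(t,x,u)`. -/
noncomputable def pdt (f : ℝ × ℝ × ℝ → ℝ) (p : ℝ × ℝ × ℝ) : ℝ :=
  deriv (fun s => f (s, p.2.1, p.2.2)) p.1

/-- Partial derivative in `x` (the second coordinate) of a function of `(t,x,u)`. -/
noncomputable def pdx (f : ℝ × ℝ × ℝ → ℝ) (p : ℝ × ℝ × ℝ) : ℝ :=
  deriv (fun s => f (p.1, s, p.2.2)) p.2.1

/-- Partial derivative in `u` (the third coordinate) of a function of `(t,x,u)`. -/
noncomputable def pdu (f : ℝ × ℝ × ℝ → ℝ) (p : ℝ × ℝ × ℝ) : ℝ :=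
  deriv (fun s => f (p.1, p.2.1, s)) p.2.2

/-- Iterates of the derivation `D = ∂ₓ + ζ∂ᵤ` applied to `ζ`. -/
noncomputable def Dit (ζ : ℝ × ℝ × ℝ → ℝ) : ℕ → ℝ × ℝ × ℝ → ℝ
  | 0 => ζ
  | j + 1 => fun p => pdx (Dit ζ j) p + ζ p * pdu (Dit ζ j) p

/-- `H̃[ζ](t,x,u) = H(t,x,u,ζ,(Dζ),…,(D^{r−1}ζ))(t,x,u)`. -/
noncomputable def Htil (r : ℕ) (H : ℝ → ℝ → (Fin (r + 1) → ℝ) → ℝ)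
    (ζ : ℝ × ℝ × ℝ → ℝ) (p : ℝ × ℝ × ℝ) : ℝ :=
  H p.1 p.2.1 (fun i => if i.val = 0 then p.2.2 else Dit ζ (i.val - 1) p)

open Filter Topology

section Helpers

/-- the curve `s ↦ (a s, b s, c s)` has a derivative -/
lemma hasDerivAt_tri {a b c : ℝ → ℝ} {a' b' c' s : ℝ}
    (ha : HasDerivAt a a' s) (hb : HasDerivAt b b' s) (hc : HasDerivAt c c' s) :
    HasDerivAt (fun s => ((a s, b s, c s) : ℝ × ℝ × ℝ)) (a', b', c') s :=
  ha.prodMk (hb.prodMk hc)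

lemma comp3 {g : ℝ × ℝ × ℝ → ℝ} {a b c : ℝ → ℝ} {a' b' c' s : ℝ}
    (hg : DifferentiableAt ℝ g (a s, b s, c s))
    (ha : HasDerivAt a a' s) (hb : HasDerivAt b b' s) (hc : HasDerivAt c c' s) :
    HasDerivAt (fun s => g (a s, b s, c s))
      (fderiv ℝ g (a s, b s, c s) (a', b', c')) s :=
  hg.hasFDerivAt.comp_hasDerivAt s (hasDerivAt_tri ha hb hc)

lemma pdt_eq {g : ℝ × ℝ × ℝ → ℝ} {p : ℝ × ℝ × ℝ} (hg : DifferentiableAt ℝ g p) :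
    pdt g p = fderiv ℝ g p (1, 0, 0) := by
  have := comp3 (a := fun s => s) (b := fun _ => p.2.1) (c := fun _ => p.2.2)
    (s := p.1) (by simpa using hg) (hasDerivAt_id _) (hasDerivAt_const _ _)
    (hasDerivAt_const _ _)
  simpa [pdt] using this.deriv

lemma pdx_eq {g : ℝ × ℝ × ℝ → ℝ} {p : ℝ × ℝ × ℝ} (hg : DifferentiableAt ℝ g p) :
    pdx g p = fderiv ℝ g p (0, 1, 0) := by
  have := comp3 (a := fun _ => p.1) (b := fun s => s) (c := fun _ => p.2.2)
    (s := p.2.1) (by simpa using hg) (hasDerivAt_const _ _) (hasDerivAt_id _)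
    (hasDerivAt_const _ _)
  simpa [pdx] using this.deriv

lemma pdu_eq {g : ℝ × ℝ × ℝ → ℝ} {p : ℝ × ℝ × ℝ} (hg : DifferentiableAt ℝ g p) :
    pdu g p = fderiv ℝ g p (0, 0, 1) := by
  have := comp3 (a := fun _ => p.1) (b := fun _ => p.2.1) (c := fun s => s)
    (s := p.2.2) (by simpa using hg) (hasDerivAt_const _ _) (hasDerivAt_const _ _)
    (hasDerivAt_id _)
  simpa [pdu] using this.deriv

lemma fderiv_apply3 {g : ℝ × ℝ × ℝ → ℝ} {p : ℝ × ℝ × ℝ} (hg : DifferentiableAt ℝ g p)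
    (a b c : ℝ) :
    fderiv ℝ g p (a, b, c) = a * pdt g p + b * pdx g p + c * pdu g p := by
  have h : ((a, b, c) : ℝ × ℝ × ℝ)
      = a • ((1:ℝ), (0:ℝ), (0:ℝ)) + b • ((0:ℝ), (1:ℝ), (0:ℝ)) + c • ((0:ℝ), (0:ℝ), (1:ℝ)) := by
    simp [Prod.ext_iff]
  rw [h, map_add, map_add, map_smul, map_smul, map_smul, pdt_eq hg, pdx_eq hg, pdu_eq hg]
  simp [mul_comm]

/-- chain rule in the `x` direction along `s ↦ (t, s, φ s)` -/
lemma hasDerivAt_comp_x {g : ℝ × ℝ × ℝ → ℝ} {t x d : ℝ} {φ : ℝ → ℝ}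
    (hg : DifferentiableAt ℝ g (t, x, φ x)) (hφ : HasDerivAt φ d x) :
    HasDerivAt (fun s => g (t, s, φ s))
      (pdx g (t, x, φ x) + d * pdu g (t, x, φ x)) x := by
  have := comp3 (a := fun _ => t) (b := fun s => s) (c := φ) (s := x)
    hg (hasDerivAt_const _ _) (hasDerivAt_id _) hφ
  convert this using 1
  rw [fderiv_apply3 hg]; ring

/-- chain rule in the `t` direction along `s ↦ (s, x, ψ s)` -/
lemma hasDerivAt_comp_t {g : ℝ × ℝ × ℝ → ℝ} {t x d : ℝ} {ψ : ℝ → ℝ}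
    (hg : DifferentiableAt ℝ g (t, x, ψ t)) (hψ : HasDerivAt ψ d t) :
    HasDerivAt (fun s => g (s, x, ψ s))
      (pdt g (t, x, ψ t) + d * pdu g (t, x, ψ t)) t := by
  have := comp3 (a := fun s => s) (b := fun _ => x) (c := ψ) (s := t)
    hg (hasDerivAt_id _) (hasDerivAt_const _ _) hψ
  convert this using 1
  rw [fderiv_apply3 hg]; ring

lemma hasDerivAt_pdx {g : ℝ × ℝ × ℝ → ℝ} {t x u : ℝ}
    (hg : DifferentiableAt ℝ g (t, x, u)) :
    HasDerivAt (fun s => g (t, s, u)) (pdx g (t, x, u)) x := by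
  simpa using hasDerivAt_comp_x (φ := fun _ => u) hg (hasDerivAt_const x u)

lemma hasDerivAt_pdt {g : ℝ × ℝ × ℝ → ℝ} {t x u : ℝ}
    (hg : DifferentiableAt ℝ g (t, x, u)) :
    HasDerivAt (fun s => g (s, x, u)) (pdt g (t, x, u)) t := by
  simpa using hasDerivAt_comp_t (ψ := fun _ => u) hg (hasDerivAt_const t u)

/-- partial derivatives of `C^∞`-on-open functions are `C^∞` there -/
lemma contDiffOn_pdx {g : ℝ × ℝ × ℝ → ℝ} {s : Set (ℝ × ℝ × ℝ)} (hs : IsOpen s)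
    (hg : ContDiffOn ℝ (⊤ : ℕ∞) g s) : ContDiffOn ℝ (⊤ : ℕ∞) (pdx g) s := by
  have h1 : ContDiffOn ℝ (⊤ : ℕ∞) (fun p => fderiv ℝ g p ((0:ℝ), (1:ℝ), (0:ℝ))) s :=
    (hg.fderiv_of_isOpen hs (by simp)).clm_apply contDiffOn_const
  exact h1.congr fun p hp =>
    pdx_eq ((hg.differentiableOn (by simp)).differentiableAt (hs.mem_nhds hp))

lemma contDiffOn_pdt {g : ℝ × ℝ × ℝ → ℝ} {s : Set (ℝ × ℝ × ℝ)} (hs : IsOpen s)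
    (hg : ContDiffOn ℝ (⊤ : ℕ∞) g s) : ContDiffOn ℝ (⊤ : ℕ∞) (pdt g) s := by
  have h1 : ContDiffOn ℝ (⊤ : ℕ∞) (fun p => fderiv ℝ g p ((1:ℝ), (0:ℝ), (0:ℝ))) s :=
    (hg.fderiv_of_isOpen hs (by simp)).clm_apply contDiffOn_const
  exact h1.congr fun p hp =>
    pdt_eq ((hg.differentiableOn (by simp)).differentiableAt (hs.mem_nhds hp))

lemma contDiffOn_pdu {g : ℝ × ℝ × ℝ → ℝ} {s : Set (ℝ × ℝ × ℝ)} (hs : IsOpen s)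
    (hg : ContDiffOn ℝ (⊤ : ℕ∞) g s) : ContDiffOn ℝ (⊤ : ℕ∞) (pdu g) s := by
  have h1 : ContDiffOn ℝ (⊤ : ℕ∞) (fun p => fderiv ℝ g p ((0:ℝ), (0:ℝ), (1:ℝ))) s :=
    (hg.fderiv_of_isOpen hs (by simp)).clm_apply contDiffOn_const
  exact h1.congr fun p hp =>
    pdu_eq ((hg.differentiableOn (by simp)).differentiableAt (hs.mem_nhds hp))

/-- Clairaut / symmetry of second derivatives on an open set -/
lemma pd_symm {g : ℝ × ℝ × ℝ → ℝ} {s : Set (ℝ × ℝ × ℝ)} (hs : IsOpen s)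
    (hg : ContDiffOn ℝ (⊤ : ℕ∞) g s) {q : ℝ × ℝ × ℝ} (hq : q ∈ s) :
    pdt (pdx g) q = pdx (pdt g) q := by
  set f' : (ℝ × ℝ × ℝ) → (ℝ × ℝ × ℝ) →L[ℝ] ℝ := fderiv ℝ g with hf'
  have hdiffon : ∀ p ∈ s, DifferentiableAt ℝ g p := fun p hp =>
    (hg.differentiableOn (by simp)).differentiableAt (hs.mem_nhds hp)
  have hf's : ContDiffOn ℝ (⊤ : ℕ∞) f' s := hg.fderiv_of_isOpen hs (by simp)
  have hf'd : DifferentiableAt ℝ f' q :=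
    (hf's.differentiableOn (by simp)).differentiableAt (hs.mem_nhds hq)
  set f'' := fderiv ℝ f' q with hf''
  have hsymm : ∀ v w, f'' v w = f'' w v := by
    intro v w
    refine second_derivative_symmetric_of_eventually (f := g) ?_ hf'd.hasFDerivAt v w
    filter_upwards [hs.mem_nhds hq] with y hy using (hdiffon y hy).hasFDerivAt
  have happly : ∀ v : ℝ × ℝ × ℝ, DifferentiableAt ℝ (fun p => f' p v) q :=
    fun v => hf'd.clm_apply (differentiableAt_const v)
  have hfd_apply : ∀ v w : ℝ × ℝ × ℝ, fderiv ℝ (fun p => f' p v) q w = f'' w v := by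
    intro v w
    have : HasFDerivAt (fun p => f' p v)
        ((ContinuousLinearMap.apply ℝ ℝ v).comp f'') q :=
      (ContinuousLinearMap.apply ℝ ℝ v).hasFDerivAt.comp q hf'd.hasFDerivAt
    rw [this.fderiv]; rfl
  have e1 : pdt (pdx g) q = f'' (1,0,0) (0,1,0) := by
    have := pdt_eq (g := fun p => f' p ((0:ℝ),(1:ℝ),(0:ℝ))) (p := q) (happly _)
    calc pdt (pdx g) q = pdt (fun p => f' p (0,1,0)) q := by
          unfold pdt
          apply Filter.EventuallyEq.deriv_eq
          have hcont : Continuous (fun z : ℝ => ((z, q.2.1, q.2.2) : ℝ × ℝ × ℝ)) := by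
            fun_prop
          have : ∀ᶠ z in 𝓝 q.1, ((z, q.2.1, q.2.2) : ℝ × ℝ × ℝ) ∈ s := by
            have := hcont.continuousAt (x := q.1)
            exact this.preimage_mem_nhds (hs.mem_nhds (by simpa using hq))
          filter_upwards [this] with z hz using pdx_eq (hdiffon _ hz)
      _ = fderiv ℝ (fun p => f' p (0,1,0)) q (1,0,0) := this
      _ = f'' (1,0,0) (0,1,0) := hfd_apply _ _
  have e2 : pdx (pdt g) q = f'' (0,1,0) (1,0,0) := by
    have := pdx_eq (g := fun p => f' p ((1:ℝ),(0:ℝ),(0:ℝ))) (p := q) (happly _)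
    calc pdx (pdt g) q = pdx (fun p => f' p (1,0,0)) q := by
          unfold pdx
          apply Filter.EventuallyEq.deriv_eq
          have hcont : Continuous (fun z : ℝ => ((q.1, z, q.2.2) : ℝ × ℝ × ℝ)) := by
            fun_prop
          have : ∀ᶠ z in 𝓝 q.2.1, ((q.1, z, q.2.2) : ℝ × ℝ × ℝ) ∈ s := by
            have := hcont.continuousAt (x := q.2.1)
            exact this.preimage_mem_nhds (hs.mem_nhds (by simpa using hq))
          filter_upwards [this] with z hz using pdt_eq (hdiffon _ hz)
      _ = fderiv ℝ (fun p => f' p (1,0,0)) q (0,1,0) := this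
      _ = f'' (0,1,0) (1,0,0) := hfd_apply _ _
  rw [e1, e2, hsymm]

end Helpers

/-- Forward direction of Theorem 3: every one-parametric family `u = f(t,x,κ)` of
solutions of the evolution equation gives rise to a solution `ζ = −Φₓ/Φᵤ` of the
determining equation DE₀, and every member of the family is invariant under `∂ₓ + ζ∂ᵤ`. -/
theorem family_gives_reduction_operator
    (r : ℕ) (hr : 1 ≤ r) (H : ℝ → ℝ → (Fin (r + 1) → ℝ) → ℝ)
    (hH : ContDiff ℝ (⊤ : ℕ∞) fun q : ℝ × ℝ × (Fin (r + 1) → ℝ) => H q.1 q.2.1 q.2.2)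
    (W : Set (ℝ × ℝ)) (hW : IsOpen W)
    (K : Set ℝ) (hK : IsOpen K) (hK' : IsPreconnected K)
    (f : ℝ × ℝ × ℝ → ℝ)  -- `f (t, x, κ)`
    (hf : ContDiffOn ℝ (⊤ : ℕ∞) f {p : ℝ × ℝ × ℝ | (p.1, p.2.1) ∈ W ∧ p.2.2 ∈ K})
    (hfκ : ∀ t x κ, (t, x) ∈ W → κ ∈ K → pdu f (t, x, κ) ≠ 0)
    (hsol : ∀ κ ∈ K, ∀ t x, (t, x) ∈ W →
      deriv (fun s => f (s, x, κ)) t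
        = H t x (fun i => iteratedDeriv i.val (fun s => f (t, s, κ)) x))
    (Ω : Set (ℝ × ℝ × ℝ))
    (hΩdef : Ω = {q : ℝ × ℝ × ℝ | ∃ t x κ, (t, x) ∈ W ∧ κ ∈ K ∧ q = (t, x, f (t, x, κ))})
    (hΩ : IsOpen Ω)
    (Φ : ℝ × ℝ × ℝ → ℝ) (hΦ : ContDiffOn ℝ (⊤ : ℕ∞) Φ Ω)
    (hΦu : ∀ p ∈ Ω, pdu Φ p ≠ 0)
    (hΦf : ∀ t x κ, (t, x) ∈ W → κ ∈ K → Φ (t, x, f (t, x, κ)) = κ) :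
    (∀ p ∈ Ω,
      pdt (fun q => -pdx Φ q / pdu Φ q) p
          + pdu (fun q => -pdx Φ q / pdu Φ q) p
            * Htil r H (fun q => -pdx Φ q / pdu Φ q) p
        = pdx (Htil r H (fun q => -pdx Φ q / pdu Φ q)) p
          + (-pdx Φ p / pdu Φ p) * pdu (Htil r H (fun q => -pdx Φ q / pdu Φ q)) p) ∧
    (∀ t x κ, (t, x) ∈ W → κ ∈ K →
      deriv (fun s => f (t, s, κ)) x
        = -pdx Φ (t, x, f (t, x, κ)) / pdu Φ (t, x, f (t, x, κ))) := by
  set ζ : ℝ × ℝ × ℝ → ℝ := fun q => -pdx Φ q / pdu Φ q with hζdef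
  set S : Set (ℝ × ℝ × ℝ) := {p : ℝ × ℝ × ℝ | (p.1, p.2.1) ∈ W ∧ p.2.2 ∈ K} with hSdef
  have hS : IsOpen S := by
    have h1 : Continuous (fun p : ℝ × ℝ × ℝ => (p.1, p.2.1)) := by fun_prop
    have h2 : Continuous (fun p : ℝ × ℝ × ℝ => p.2.2) := by fun_prop
    exact (hW.preimage h1).inter (hK.preimage h2)
  have hmemS : ∀ t x κ, (t, x) ∈ W → κ ∈ K → ((t, x, κ) : ℝ × ℝ × ℝ) ∈ S :=
    fun t x κ h1 h2 => ⟨h1, h2⟩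
  have hmemΩ : ∀ t x κ, (t, x) ∈ W → κ ∈ K → ((t, x, f (t, x, κ)) : ℝ × ℝ × ℝ) ∈ Ω := by
    intro t x κ h1 h2; rw [hΩdef]; exact ⟨t, x, κ, h1, h2, rfl⟩
  have hfd : ∀ q ∈ S, DifferentiableAt ℝ f q := fun q hq =>
    (hf.differentiableOn (by simp)).differentiableAt (hS.mem_nhds hq)
  have hΦd : ∀ p ∈ Ω, DifferentiableAt ℝ Φ p := fun p hp =>
    (hΦ.differentiableOn (by simp)).differentiableAt (hΩ.mem_nhds hp)
  -- nearby membership along x and t lines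
  have hWx : ∀ t x : ℝ, (t, x) ∈ W → ∀ᶠ s in 𝓝 x, (t, s) ∈ W := by
    intro t x htx
    have hc : ContinuousAt (fun s : ℝ => ((t, s) : ℝ × ℝ)) x := by fun_prop
    exact hc.preimage_mem_nhds (hW.mem_nhds htx)
  have hWt : ∀ t x : ℝ, (t, x) ∈ W → ∀ᶠ s in 𝓝 t, (s, x) ∈ W := by
    intro t x htx
    have hc : ContinuousAt (fun s : ℝ => ((s, x) : ℝ × ℝ)) t := by fun_prop
    exact hc.preimage_mem_nhds (hW.mem_nhds htx)
  -- Part 2 core: `∂ₓ f = ζ` along the family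
  have hA : ∀ t x κ, (t, x) ∈ W → κ ∈ K → pdx f (t, x, κ) = ζ (t, x, f (t, x, κ)) := by
    intro t x κ htx hκ
    have hp : ((t, x, f (t, x, κ)) : ℝ × ℝ × ℝ) ∈ Ω := hmemΩ t x κ htx hκ
    have hfx : HasDerivAt (fun s => f (t, s, κ)) (pdx f (t, x, κ)) x :=
      hasDerivAt_pdx (hfd _ (hmemS t x κ htx hκ))
    have hcomp : HasDerivAt (fun s => Φ (t, s, f (t, s, κ)))
        (pdx Φ (t, x, f (t, x, κ)) + pdx f (t, x, κ) * pdu Φ (t, x, f (t, x, κ))) x :=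
      hasDerivAt_comp_x (hΦd _ hp) hfx
    have hconst : deriv (fun s => Φ (t, s, f (t, s, κ))) x = deriv (fun _ : ℝ => κ) x := by
      apply Filter.EventuallyEq.deriv_eq
      filter_upwards [hWx t x htx] with s hs using hΦf t s κ hs hκ
    have h0 : pdx Φ (t, x, f (t, x, κ)) + pdx f (t, x, κ) * pdu Φ (t, x, f (t, x, κ)) = 0 := by
      rw [← hcomp.deriv, hconst, deriv_const]
    have hu := hΦu _ hp
    show pdx f (t, x, κ) = -pdx Φ (t, x, f (t, x, κ)) / pdu Φ (t, x, f (t, x, κ))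
    field_simp
    linarith [h0]
  have part2 : ∀ t x κ, (t, x) ∈ W → κ ∈ K →
      deriv (fun s => f (t, s, κ)) x
        = -pdx Φ (t, x, f (t, x, κ)) / pdu Φ (t, x, f (t, x, κ)) := by
    intro t x κ htx hκ
    exact hA t x κ htx hκ
  -- smoothness of ζ and its D-iterates on Ω
  have hζs : ContDiffOn ℝ (⊤ : ℕ∞) ζ Ω :=
    ((contDiffOn_pdx hΩ hΦ).neg).div (contDiffOn_pdu hΩ hΦ) hΦu
  have hDs : ∀ j, ContDiffOn ℝ (⊤ : ℕ∞) (Dit ζ j) Ω := by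
    intro j
    induction j with
    | zero => exact hζs
    | succ j ih =>
        exact (contDiffOn_pdx hΩ ih).add (hζs.mul (contDiffOn_pdu hΩ ih))
  have hDd : ∀ j, ∀ p ∈ Ω, DifferentiableAt ℝ (Dit ζ j) p := fun j p hp =>
    ((hDs j).differentiableOn (by simp)).differentiableAt (hΩ.mem_nhds hp)
  -- family identity for the iterates
  have hfam : ∀ j, ∀ t x κ, (t, x) ∈ W → κ ∈ K →
      Dit ζ j (t, x, f (t, x, κ)) = iteratedDeriv (j + 1) (fun s => f (t, s, κ)) x := by
    intro j
    induction j with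
    | zero =>
        intro t x κ htx hκ
        rw [iteratedDeriv_one]
        exact ((hA t x κ htx hκ)).symm
    | succ j ih =>
        intro t x κ htx hκ
        have hq : ((t, x, κ) : ℝ × ℝ × ℝ) ∈ S := hmemS t x κ htx hκ
        have hp : ((t, x, f (t, x, κ)) : ℝ × ℝ × ℝ) ∈ Ω := hmemΩ t x κ htx hκ
        have hfx : HasDerivAt (fun s => f (t, s, κ)) (pdx f (t, x, κ)) x :=
          hasDerivAt_pdx (hfd _ hq)
        have hD : HasDerivAt (fun s => Dit ζ j (t, s, f (t, s, κ)))
            (pdx (Dit ζ j) (t, x, f (t, x, κ))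
              + pdx f (t, x, κ) * pdu (Dit ζ j) (t, x, f (t, x, κ))) x :=
          hasDerivAt_comp_x (hDd j _ hp) hfx
        have hev : deriv (iteratedDeriv (j + 1) (fun s => f (t, s, κ))) x
            = deriv (fun s => Dit ζ j (t, s, f (t, s, κ))) x := by
          apply Filter.EventuallyEq.deriv_eq
          filter_upwards [hWx t x htx] with s hs using (ih t s κ hs hκ).symm
        rw [iteratedDeriv_succ, hev, hD.deriv]
        show pdx (Dit ζ j) _ + ζ _ * pdu (Dit ζ j) _ = _
        rw [← hA t x κ htx hκ]
  -- the value of Htil along the family is `∂ₜ f`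
  have hHfam : ∀ t x κ, (t, x) ∈ W → κ ∈ K →
      Htil r H ζ (t, x, f (t, x, κ)) = pdt f (t, x, κ) := by
    intro t x κ htx hκ
    have : Htil r H ζ (t, x, f (t, x, κ))
        = H t x (fun i => iteratedDeriv i.val (fun s => f (t, s, κ)) x) := by
      unfold Htil
      congr 1
      funext i
      by_cases h0 : i.val = 0
      · simp [h0, iteratedDeriv_zero]
      · simp only [h0, if_false]
        rw [hfam (i.val - 1) t x κ htx hκ, Nat.sub_add_cancel (Nat.one_le_iff_ne_zero.2 h0)]
    rw [this, ← hsol κ hκ t x htx]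
    rfl
  -- smoothness of Htil on Ω
  have hGs : ContDiffOn ℝ (⊤ : ℕ∞) (Htil r H ζ) Ω := by
    have hinner : ContDiffOn ℝ (⊤ : ℕ∞)
        (fun p : ℝ × ℝ × ℝ =>
          ((p.1, p.2.1, fun i : Fin (r + 1) => if i.val = 0 then p.2.2 else Dit ζ (i.val - 1) p)
            : ℝ × ℝ × (Fin (r + 1) → ℝ))) Ω := by
      refine ContDiffOn.prodMk ?_ (ContDiffOn.prodMk ?_ ?_)
      · exact contDiff_fst.contDiffOn
      · exact (contDiff_fst.comp contDiff_snd).contDiffOn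
      · refine contDiffOn_pi.2 fun i => ?_
        by_cases h0 : i.val = 0
        · simp only [h0, if_true]
          exact (contDiff_snd.comp contDiff_snd).contDiffOn
        · simp only [h0, if_false]
          exact hDs _
    have := hH.comp_contDiffOn hinner
    exact this.congr fun p _ => rfl
  have hGd : ∀ p ∈ Ω, DifferentiableAt ℝ (Htil r H ζ) p := fun p hp =>
    (hGs.differentiableOn (by simp)).differentiableAt (hΩ.mem_nhds hp)
  have hζd : ∀ p ∈ Ω, DifferentiableAt ℝ ζ p := fun p hp =>
    (hζs.differentiableOn (by simp)).differentiableAt (hΩ.mem_nhds hp)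
  -- main computation of DE₀
  refine ⟨?_, part2⟩
  intro p hp
  rw [hΩdef] at hp
  obtain ⟨t, x, κ, htx, hκ, rfl⟩ := hp
  set p : ℝ × ℝ × ℝ := (t, x, f (t, x, κ)) with hpd
  have hpΩ : p ∈ Ω := hmemΩ t x κ htx hκ
  have hqS : ((t, x, κ) : ℝ × ℝ × ℝ) ∈ S := hmemS t x κ htx hκ
  -- identity A differentiated in t
  have hft : HasDerivAt (fun s => f (s, x, κ)) (pdt f (t, x, κ)) t :=
    hasDerivAt_pdt (hfd _ hqS)
  have hAt : HasDerivAt (fun s => ζ (s, x, f (s, x, κ)))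
      (pdt ζ p + pdt f (t, x, κ) * pdu ζ p) t :=
    hasDerivAt_comp_t (hζd _ hpΩ) hft
  have eqA : pdt ζ p + pdt f (t, x, κ) * pdu ζ p = pdt (pdx f) (t, x, κ) := by
    have hev : deriv (fun s => ζ (s, x, f (s, x, κ))) t
        = deriv (fun s => pdx f (s, x, κ)) t := by
      apply Filter.EventuallyEq.deriv_eq
      filter_upwards [hWt t x htx] with s hs using (hA s x κ hs hκ).symm
    rw [← hAt.deriv, hev]; rfl
  -- identity B differentiated in x
  have hfx : HasDerivAt (fun s => f (t, s, κ)) (pdx f (t, x, κ)) x :=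
    hasDerivAt_pdx (hfd _ hqS)
  have hBx : HasDerivAt (fun s => Htil r H ζ (t, s, f (t, s, κ)))
      (pdx (Htil r H ζ) p + pdx f (t, x, κ) * pdu (Htil r H ζ) p) x :=
    hasDerivAt_comp_x (hGd _ hpΩ) hfx
  have eqB : pdx (Htil r H ζ) p + pdx f (t, x, κ) * pdu (Htil r H ζ) p
      = pdx (pdt f) (t, x, κ) := by
    have hev : deriv (fun s => Htil r H ζ (t, s, f (t, s, κ))) x
        = deriv (fun s => pdt f (t, s, κ)) x := by
      apply Filter.EventuallyEq.deriv_eq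
      filter_upwards [hWx t x htx] with s hs using hHfam t s κ hs hκ
    rw [← hBx.deriv, hev]; rfl
  -- symmetry of mixed partials
  have hsymm : pdt (pdx f) (t, x, κ) = pdx (pdt f) (t, x, κ) := pd_symm hS hf hqS
  -- put everything together
  have hGv : Htil r H ζ p = pdt f (t, x, κ) := hHfam t x κ htx hκ
  have hζv : ζ p = pdx f (t, x, κ) := (hA t x κ htx hκ).symm
  show pdt ζ p + pdu ζ p * Htil r H ζ p = pdx (Htil r H ζ) p + ζ p * pdu (Htil r H ζ) p
  rw [hGv, hζv]
  calc pdt ζ p + pdu ζ p * pdt f (t, x, κ)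
      = pdt ζ p + pdt f (t, x, κ) * pdu ζ p := by ring
    _ = pdt (pdx f) (t, x, κ) := eqA
    _ = pdx (pdt f) (t, x, κ) := hsymm
    _ = pdx (Htil r H ζ) p + pdx f (t, x, κ) * pdu (Htil r H ζ) p := eqB.symm
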